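/- Define Ω(𝔳,𝔴) = (2𝔳 + 3𝔴)² − 36𝔳 and 𝒢(𝔳,𝔴) = (1/224)·{ 7·[ 6·(2𝔴−3)·log(−√Ω − 2𝔳 − 3𝔴 + 9) + 16·𝔳·log((√Ω − 2𝔳 − 3𝔴)²) − 2·(8𝔳 − 12𝔴 + 9)·log(√Ω − 2𝔳 − 3𝔴 + 9/2) + 2·(4𝔳 + 3𝔴)·log( (1/567)·(4√Ω + 8𝔳 + 12𝔴 + 9)² + 1 ) ] − 4√7·(4𝔳 − 3(𝔴+3))·arctan( (4√Ω + 8𝔳 + 12𝔴 + 9)/(9√7) ) − (8𝔳 + 9)·log(34359738368/823543) + 2√7·(8𝔳 − 27)·arctan(5/√7) }, where log is the natural logarithm of the absolute value (with log 0 = 0). Then for every 𝔳 with 0 < 𝔳 < 9/4, 𝒢(𝔳, 3/2) = (1/16)·[ 8·𝔳·log(16·𝔳²) + (9 − 8𝔳)·log(9/2 − 4𝔳) ]. -/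
import Mathlib


/-- `Ω(𝔳,𝔴) = (2𝔳 + 3𝔴)² − 36𝔳`. -/
noncomputable def Omg (v w : ℝ) : ℝ := (2 * v + 3 * w) ^ 2 - 36 * v

/-- The symplectic (AMSY) potential `𝒢(𝔳,𝔴)` of the orthotoric Ricci-flat Kähler metric on
`tot K_{WP[112]}`.  `Real.log` is the natural logarithm of the absolute value
(with `log 0 = 0`). -/
noncomputable def Gwp (v w : ℝ) : ℝ :=
  (1 / 224) *
    (7 * (6 * (2 * w - 3) * Real.log (-Real.sqrt (Omg v w) - 2 * v - 3 * w + 9)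
        + 16 * v * Real.log ((Real.sqrt (Omg v w) - 2 * v - 3 * w) ^ 2)
        - 2 * (8 * v - 12 * w + 9) *
            Real.log (Real.sqrt (Omg v w) - 2 * v - 3 * w + 9 / 2)
        + 2 * (4 * v + 3 * w) *
            Real.log ((1 / 567) * (4 * Real.sqrt (Omg v w) + 8 * v + 12 * w + 9) ^ 2 + 1))
      - 4 * Real.sqrt 7 * (4 * v - 3 * (w + 3)) *
          Real.arctan ((4 * Real.sqrt (Omg v w) + 8 * v + 12 * w + 9) / (9 * Real.sqrt 7))
      - (8 * v + 9) * Real.log (34359738368 / 823543)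
      + 2 * Real.sqrt 7 * (8 * v - 27) * Real.arctan (5 / Real.sqrt 7))

/-- On the exceptional divisor `𝔴 = 3/2`, for every `0 < 𝔳 < 9/4`,
`𝒢(𝔳, 3/2) = (1/16)(8𝔳·log(16𝔳²) + (9 − 8𝔳)·log(9/2 − 4𝔳))`. -/
theorem stmt_10 (v : ℝ) (hv₁ : 0 < v) (hv₂ : v < 9 / 4) :
    Gwp v (3 / 2) =
      (1 / 16) * (8 * v * Real.log (16 * v ^ 2)
        + (9 - 8 * v) * Real.log (9 / 2 - 4 * v)) := by
  have hs : Real.sqrt (Omg v (3 / 2)) = 9 / 2 - 2 * v := by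
    have h : Omg v (3 / 2) = (9 / 2 - 2 * v) ^ 2 := by unfold Omg; ring
    rw [h, Real.sqrt_sq (by linarith)]
  have e1 : -(9 / 2 - 2 * v) - 2 * v - 3 * (3 / 2 : ℝ) + 9 = 0 := by ring
  have e2 : ((9 / 2 - 2 * v) - 2 * v - 3 * (3 / 2 : ℝ)) ^ 2 = 16 * v ^ 2 := by ring
  have e3 : (9 / 2 - 2 * v) - 2 * v - 3 * (3 / 2 : ℝ) + 9 / 2 = 9 / 2 - 4 * v := by ring
  have e4 : (1 / 567 : ℝ) * (4 * (9 / 2 - 2 * v) + 8 * v + 12 * (3 / 2) + 9) ^ 2 + 1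
      = 32 / 7 := by ring
  have s7 : Real.sqrt 7 ≠ 0 := by positivity
  have e5 : (4 * (9 / 2 - 2 * v) + 8 * v + 12 * (3 / 2 : ℝ) + 9) / (9 * Real.sqrt 7)
      = 5 / Real.sqrt 7 := by
    field_simp
    ring
  have hlog : Real.log (34359738368 / 823543 : ℝ) = 7 * Real.log (32 / 7) := by
    rw [show (34359738368 / 823543 : ℝ) = (32 / 7) ^ 7 by norm_num, Real.log_pow]
    push_cast; ring
  rw [Gwp, hs, e1, e2, e3, e4, e5, hlog, Real.log_zero]
  ring
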